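/- arXiv:2510.00149 — 4 statements merged into one kernel-verified Lean document; each statement's English description precedes it below -/
import Mathlib

section
/- Let B = (G, β) be a bicolored graph and let ab be an edge of G. Then applying local inversions along the string w = ababab (length 6) yields B_w = B^{{a,b}}; that is, the underlying graph is unchanged and exactly the colors of a and b are flipped. -/
open Classical

noncomputable section

/-- The local complement of a simple graph `G` at a vertex `a`: adjacency is toggled
between every pair of distinct neighbors of `a`, all other adjacencies unchanged. -/
def localComp {V : Type*} (G : SimpleGraph V) (a : V) : SimpleGraph V where
  Adj x y := (G.Adj a x ∧ G.Adj a y ∧ x ≠ y ∧ ¬ G.Adj x y) ∨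
             (G.Adj x y ∧ ¬ (G.Adj a x ∧ G.Adj a y))
  symm := by
    constructor
    intro x y h
    rcases h with ⟨hx, hy, hne, hna⟩ | ⟨h, hn⟩
    · exact Or.inl ⟨hy, hx, hne.symm, fun h' => hna h'.symm⟩
    · exact Or.inr ⟨h.symm, fun h' => hn ⟨h'.2, h'.1⟩⟩
  loopless := by
    constructor
    intro x h
    rcases h with ⟨_, _, hne, _⟩ | ⟨h, _⟩
    · exact hne rfl
    · exact G.loopless.irrefl x h

/-- A bicolored graph: a simple graph together with a `{-1,1}`-coloring (units of ℤ). -/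
abbrev Bicolored (V : Type*) := SimpleGraph V × (V → ℤˣ)

/-- Local inversion at a vertex `a`: locally complement the graph at `a` and flip
the colors of all neighbors of `a`. -/
def localInv {V : Type*} (B : Bicolored V) (a : V) : Bicolored V :=
  (localComp B.1 a, fun v => if B.1.Adj a v then - B.2 v else B.2 v)

/-- Sequential local inversion along a string (list) of vertices. -/
def invSeq {V : Type*} (B : Bicolored V) (w : List V) : Bicolored V :=
  w.foldl localInv B

/-- `flipOn B S` keeps the underlying graph and flips the colors exactly on `S`. -/
def flipOn {V : Type*} (B : Bicolored V) (S : Set V) : Bicolored V :=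
  (B.1, fun v => if v ∈ S then - B.2 v else B.2 v)

end

/-!
For an edge `ab`, the pivot `G * a * b * a` is symmetric in `a` and `b`, so it equals
`G * b * a * b`; since local complementation is an involution, `G * a * b * a * b * a * b = G`.
On colours, `aba` flips only `a`; the edge `ab` survives in the pivot, so the following `bab`
flips only `b`, and colour flips commute with local inversions.
-/

namespace SimpleGraph
variable {V : Type*} (G : SimpleGraph V)

theorem localComp_adj_iff {v x y : V} :
    (localComp G v).Adj x y ↔ x ≠ y ∧ Xor (G.Adj x y) (G.Adj v x ∧ G.Adj v y) := by
  rcases eq_or_ne x y with rfl | hxy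
  · simp [localComp]
  · simp only [localComp]
    grind

theorem localComp_localComp_self (v : V) : localComp (localComp G v) v = G := by
  ext x y
  simp only [localComp_adj_iff]
  grind [SimpleGraph.irrefl]

def pivot (a b : V) : SimpleGraph V :=
  localComp (localComp (localComp G a) b) a

variable {G} {a b : V}

/-- Off `{a, b}` the pivot has adjacency `A x y + A a x * A b y + A b x * A a y` over `ZMod 2`,
and `a`, `b` exchange their neighbourhoods away from each other: both are symmetric in `a`, `b`. -/
theorem pivot_comm (hab : G.Adj a b) : G.pivot a b = G.pivot b a := by
  have hne := G.ne_of_adj hab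
  ext x y
  simp only [pivot, localComp_adj_iff]
  by_cases hxa : x = a <;> by_cases hxb : x = b <;> by_cases hya : y = a <;>
    by_cases hyb : y = b <;> by_cases hxy : x = y <;> subst_vars <;>
    simp [hab.symm, G.adj_comm, *] <;> grind

theorem pivot_adj (hab : G.Adj a b) : (G.pivot a b).Adj a b := by
  simp [pivot, localComp_adj_iff, hab, hab.symm, G.ne_of_adj hab, (G.ne_of_adj hab).symm]

theorem pivot_pivot (hab : G.Adj a b) : (G.pivot a b).pivot b a = G := by
  rw [pivot_comm hab]
  simp only [pivot, localComp_localComp_self]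

end SimpleGraph

open SimpleGraph

section Bicolored

variable {V : Type*}

theorem invSeq_append (B : Bicolored V) (w₁ w₂ : List V) :
    invSeq B (w₁ ++ w₂) = invSeq (invSeq B w₁) w₂ :=
  List.foldl_append

theorem localInv_flipOn (B : Bicolored V) (S : Set V) (v : V) :
    localInv (flipOn B S) v = flipOn (localInv B v) S := by
  refine Prod.ext rfl (funext fun x => ?_)
  simp only [localInv, flipOn]
  by_cases hv : B.1.Adj v x <;> by_cases hS : x ∈ S <;> simp [hv, hS]

theorem invSeq_flipOn (B : Bicolored V) (S : Set V) (w : List V) :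
    invSeq (flipOn B S) w = flipOn (invSeq B w) S :=
  List.foldl_hom (fun B => flipOn B S) (localInv_flipOn · S ·)

theorem flipOn_flipOn (B : Bicolored V) (S T : Set V) :
    flipOn (flipOn B S) T = flipOn B (symmDiff S T) := by
  refine Prod.ext rfl (funext fun x => ?_)
  simp only [flipOn, Set.mem_symmDiff]
  by_cases hS : x ∈ S <;> by_cases hT : x ∈ T <;> simp [hS, hT]

/-- A vertex `v ∉ {a, b}` changes colour `[a ∼ v] + ([a ∼ v] + [b ∼ v]) + [b ∼ v]` times, an
even number; `a` changes colour once (at the step `b`) and `b` twice. -/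
theorem invSeq_pivot {G : SimpleGraph V} {a b : V} (hab : G.Adj a b) (c : V → ℤˣ) :
    invSeq (G, c) [a, b, a] = flipOn (G.pivot a b, c) {a} := by
  have hne := G.ne_of_adj hab
  refine Prod.ext rfl (funext fun v => ?_)
  simp only [invSeq, List.foldl, localInv, flipOn, Set.mem_singleton_iff, localComp_adj_iff]
  obtain rfl | hva := eq_or_ne v a
  · simp [hab, hab.symm, hne.symm]
  obtain rfl | hvb := eq_or_ne v b
  · simp [hab, hab.symm, hne, hva]
  by_cases hav : G.Adj a v <;> by_cases hbv : G.Adj b v <;>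
    simp [hab, hab.symm, hne.symm, hva, hva.symm, hvb.symm, hav, hbv]

end Bicolored

/-- Along an edge `ab`, the string `ababab` flips exactly the colors of `a` and `b`
and leaves the underlying graph unchanged. -/
theorem stmt2 {V : Type*} (B : Bicolored V) (a b : V) (hab : B.1.Adj a b) :
    invSeq B [a, b, a, b, a, b] = flipOn B {a, b} := by
  obtain ⟨G, c⟩ := B
  calc invSeq (G, c) [a, b, a, b, a, b]
      = invSeq (invSeq (G, c) [a, b, a]) [b, a, b] := invSeq_append _ [a, b, a] [b, a, b]
    _ = flipOn (invSeq (G.pivot a b, c) [b, a, b]) {a} := by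
      rw [invSeq_pivot hab, invSeq_flipOn]
    _ = flipOn (flipOn (G, c) {b}) {a} := by
      rw [invSeq_pivot (pivot_adj hab).symm, pivot_pivot hab]
    _ = flipOn (G, c) {a, b} := by
      rw [flipOn_flipOn, (Set.disjoint_singleton.2 (G.ne_of_adj hab).symm).symmDiff_eq_sup]
      exact congrArg _ ((Set.union_comm _ _).trans (Set.insert_eq a {b}).symm)
end

section
/- Let B = (G, β) be a bicolored graph on a path P_3 with vertices a, b, c, where b is the degree-2 vertex (edges ab and bc, no edge ac). Then applying local inversions along the string ababacacb (length 9) yields B_w = (G, -β); that is, all three vertex colors are flipped and the underlying graph remains the path. -/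
open Classical

/-!
On three vertices, local complementation at `x` keeps the edges at `x` and toggles the edge
between the two other vertices exactly when `x` is adjacent to both. Along `ababacacb` the
edge set therefore runs through
`{ab, bc} → {ab, bc} → {ab, bc, ac} → {ab, ac} → {ab, ac} → {ab, bc, ac} → {bc, ac} → {bc, ac}
→ {ab, bc, ac} → {ab, bc}`,
and each of `a`, `b`, `c` is a neighbour of the pivot in exactly five of the nine steps, so every
colour is flipped an odd number of times.
-/

theorem localComp_adj {V : Type*} {G : SimpleGraph V} {a x y : V} :
    (localComp G a).Adj x y ↔ x ≠ y ∧ ¬(G.Adj x y ↔ G.Adj a x ∧ G.Adj a y) := by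
  change (_ ∨ _) ↔ _
  have : G.Adj x y → x ≠ y := G.ne_of_adj
  tauto

theorem SimpleGraph.ext_of_forall_eq_or_eq_or_eq {V : Type*} {G H : SimpleGraph V} {a b c : V}
    (huniv : ∀ v, v = a ∨ v = b ∨ v = c) (hab : G.Adj a b ↔ H.Adj a b)
    (hbc : G.Adj b c ↔ H.Adj b c) (hac : G.Adj a c ↔ H.Adj a c) : G = H := by
  ext x y
  rcases huniv x with hx | hx | hx <;> rcases huniv y with hy | hy | hy <;>
    simp only [hx, hy, SimpleGraph.irrefl, hab, hbc, hac, G.adj_comm b a, H.adj_comm b a,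
      G.adj_comm c a, H.adj_comm c a, G.adj_comm c b, H.adj_comm c b]

theorem stmt6_general {V : Type*} (B : Bicolored V) (a b c : V)
    (hac : a ≠ c)
    (huniv : ∀ v : V, v = a ∨ v = b ∨ v = c)
    (e1 : B.1.Adj a b) (e2 : B.1.Adj b c) (e3 : ¬ B.1.Adj a c) :
    invSeq B [a, b, a, b, a, c, a, c, b] = (B.1, fun v => - B.2 v) := by
  obtain ⟨G, β⟩ := B
  dsimp only at e1 e2 e3
  have e3' : ¬G.Adj c a := fun h => e3 h.symm
  simp only [invSeq, List.foldl_cons, List.foldl_nil, localInv]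
  refine Prod.ext (SimpleGraph.ext_of_forall_eq_or_eq_or_eq huniv ?_ ?_ ?_) (funext fun v => ?_)
  rotate_right
  rcases huniv v with rfl | rfl | rfl
  all_goals simp [localComp_adj, e1, e1.symm, e2, e2.symm, e3, e3', e1.ne, e1.ne', e2.ne, e2.ne',
    hac, hac.symm]

/-- A bicolored graph on a path `P_3` with middle vertex `b` is color-reversed by the
string `ababacacb`. -/
theorem stmt6 {V : Type*} (B : Bicolored V) (a b c : V)
    (hab : a ≠ b) (hbc : b ≠ c) (hac : a ≠ c)
    (huniv : ∀ v : V, v = a ∨ v = b ∨ v = c)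
    (e1 : B.1.Adj a b) (e2 : B.1.Adj b c) (e3 : ¬ B.1.Adj a c) :
    invSeq B [a, b, a, b, a, c, a, c, b] = (B.1, fun v => - B.2 v) :=
  stmt6_general B a b c hac huniv e1 e2 e3
end

section
/- Let G be a connected graph on n ≥ 3 vertices, let a be any vertex of G, and let B be any bicolored graph on G. Then there exists a string w of length 7 such that B_w = B^{a}; that is, the underlying graph is unchanged and exactly the color of a is flipped. -/
open Classical

/-!
Local inversion commutes with pulling a bicolored graph back along an injective map, so the
adjacency of two vertices `x, y` and the colour of `x` after a word are computed inside the
subgraph induced by `x`, `y` and the letters of the word. The words `a b a c a b c` (for a path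
`a - b - c`) and `a b a c b a c` (for non-adjacent neighbours `b, c` of `a`) have three letters,
so it suffices to check them on every graph with five vertices, which is a finite computation
on a Boolean model of local inversion; adding two isolated vertices guarantees that five
vertices are available. Every vertex of a connected graph on at least three vertices is the
end of such a path or the centre of such a cherry.
-/

def pathWord {V : Type*} (a b c : V) : List V := [a, b, a, c, a, b, c]

def cherryWord {V : Type*} (a b c : V) : List V := [a, b, a, c, b, a, c]

namespace Bicolored

variable {V W : Type*}

def comap (f : W → V) (B : Bicolored V) : Bicolored W := (B.1.comap f, B.2 ∘ f)

theorem comap_localInv {f : W → V} (hf : f.Injective) (B : Bicolored V) (p : W) :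
    (localInv B (f p)).comap f = localInv (B.comap f) p := by
  refine Prod.ext ?_ rfl
  ext i j
  simp [comap, localInv, localComp, hf.ne_iff]

theorem comap_invSeq {f : W → V} (hf : f.Injective) (B : Bicolored V) (w : List W) :
    (invSeq B (w.map f)).comap f = invSeq (B.comap f) w := by
  induction w generalizing B with
  | nil => rfl
  | cons p w ih => exact (ih _).trans (congrArg (invSeq · w) (comap_localInv hf B p))

theorem comap_flipOn (f : W → V) (B : Bicolored V) (S : Set V) :
    (flipOn B S).comap f = flipOn (B.comap f) (f ⁻¹' S) :=
  rfl

theorem ext_of_comap {B B' : Bicolored V}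
    (h : ∀ x y, ∃ f : W → V, x ∈ Set.range f ∧ y ∈ Set.range f ∧ B.comap f = B'.comap f) :
    B = B' := by
  refine Prod.ext (SimpleGraph.ext (funext₂ fun x y => propext ?_)) (funext fun x => ?_)
  · obtain ⟨f, ⟨i, rfl⟩, ⟨j, rfl⟩, hf⟩ := h x y
    exact iff_of_eq (congrArg (fun B : Bicolored W => B.1.Adj i j) hf)
  · obtain ⟨f, ⟨i, rfl⟩, -, hf⟩ := h x x
    exact congrFun (congrArg Prod.snd hf) i

theorem invSeq_eq_flipOn_of_comap {f : V → W} (hf : f.Injective) {B : Bicolored V}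
    {B' : Bicolored W} (hB : B'.comap f = B) {w : List V} {S : Set V}
    (h : invSeq B' (w.map f) = flipOn B' (f '' S)) : invSeq B w = flipOn B S := by
  rw [← hB, ← comap_invSeq hf, h, comap_flipOn, hf.preimage_image]

def addTwoIsolated (B : Bicolored V) : Bicolored (V ⊕ Fin 2) :=
  (B.1.map Function.Embedding.inl, Sum.elim B.2 1)

theorem comap_addTwoIsolated (B : Bicolored V) : B.addTwoIsolated.comap Sum.inl = B :=
  Prod.ext (SimpleGraph.comap_map_eq Function.Embedding.inl B.1) rfl

theorem addTwoIsolated_adj_inl (B : Bicolored V) {x y : V} :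
    B.addTwoIsolated.1.Adj (.inl x) (.inl y) ↔ B.1.Adj x y :=
  SimpleGraph.map_adj_apply (f := Function.Embedding.inl)

end Bicolored

abbrev BoolState (W : Type*) := (W → W → Bool) × (W → Bool)

namespace BoolState

variable {W : Type*}

/-- `s.2 i` records whether the colour of `i` differs from the reference colouring `γ`. -/
def Encodes (s : BoolState W) (γ : W → ℤˣ) (B : Bicolored W) : Prop :=
  (∀ i j, B.1.Adj i j ↔ s.1 i j) ∧ ∀ i, B.2 i = if s.2 i then -γ i else γ i

theorem encodes_decide_adj (B : Bicolored W) :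
    Encodes (fun i j => decide (B.1.Adj i j), fun _ => false) B.2 B :=
  ⟨fun _ _ => decide_eq_true_iff.symm, fun _ => rfl⟩

theorem Encodes.unique {s : BoolState W} {γ : W → ℤˣ} {B B' : Bicolored W}
    (h : s.Encodes γ B) (h' : s.Encodes γ B') : B = B' :=
  Prod.ext (SimpleGraph.ext (funext₂ fun i j => propext ((h.1 i j).trans (h'.1 i j).symm)))
    (funext fun i => (h.2 i).trans (h'.2 i).symm)

variable [DecidableEq W]

def step (s : BoolState W) (p : W) : BoolState W :=
  (fun i j => xor (s.1 i j) (s.1 p i && s.1 p j && i != j), fun i => xor (s.2 i) (s.1 p i))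

def run (s : BoolState W) (w : List W) : BoolState W := w.foldl step s

theorem Encodes.step {s : BoolState W} {γ : W → ℤˣ} {B : Bicolored W} (h : s.Encodes γ B)
    (p : W) : (s.step p).Encodes γ (localInv B p) := by
  refine ⟨fun i j => ?_, fun i => ?_⟩
  · simp only [localInv, localComp, h.1, BoolState.step]
    obtain rfl | hij := eq_or_ne i j
    · have hii : s.1 i i = false := by simpa using (h.1 i i).not.mp (B.1.loopless.irrefl i)
      simp [hii]
    · cases s.1 i j <;> cases s.1 p i <;> cases s.1 p j <;> simp [hij]
  · simp only [localInv, h.1, h.2, BoolState.step]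
    by_cases hp : s.1 p i <;> by_cases he : s.2 i <;> simp [hp, he]

theorem Encodes.run {s : BoolState W} {γ : W → ℤˣ} {B : Bicolored W} (h : s.Encodes γ B)
    (w : List W) : (s.run w).Encodes γ (invSeq B w) := by
  induction w generalizing s B with
  | nil => exact h
  | cons p w ih => exact ih (h.step p)

theorem invSeq_eq_flipOn_of_run (B : Bicolored W) (w : List W) (a : W)
    (h : run (fun i j => decide (B.1.Adj i j), fun _ => false) w =
      (fun i j => decide (B.1.Adj i j), fun i => i == a)) :
    invSeq B w = flipOn B {a} := by
  have hrun := (encodes_decide_adj B).run w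
  rw [h] at hrun
  exact hrun.unique ⟨fun i j => decide_eq_true_iff.symm, fun i => by simp [flipOn]⟩

end BoolState

def sym5 (b01 b02 b03 b04 b12 b13 b14 b23 b24 b34 : Bool) : Fin 5 → Fin 5 → Bool :=
  ![![false, b01, b02, b03, b04], ![b01, false, b12, b13, b14], ![b02, b12, false, b23, b24],
    ![b03, b13, b23, false, b34], ![b04, b14, b24, b34, false]]

theorem SimpleGraph.decide_adj_eq_sym5 (H : SimpleGraph (Fin 5)) :
    (fun i j => decide (H.Adj i j)) = sym5 (H.Adj 0 1) (H.Adj 0 2) (H.Adj 0 3) (H.Adj 0 4)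
      (H.Adj 1 2) (H.Adj 1 3) (H.Adj 1 4) (H.Adj 2 3) (H.Adj 2 4) (H.Adj 3 4) := by
  funext i j
  fin_cases i <;> fin_cases j <;> simp [sym5] <;> exact H.adj_comm _ _

theorem run_pathWord_sym5 : ∀ b02 b03 b04 b13 b14 b23 b24 b34 : Bool,
    BoolState.run (sym5 true b02 b03 b04 true b13 b14 b23 b24 b34, fun _ => false)
        (pathWord 0 1 2) =
      (sym5 true b02 b03 b04 true b13 b14 b23 b24 b34, fun i => i == 0) := by
  decide +kernel

theorem run_cherryWord_sym5 : ∀ b03 b04 b13 b14 b23 b24 b34 : Bool,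
    BoolState.run (sym5 true true b03 b04 false b13 b14 b23 b24 b34, fun _ => false)
        (cherryWord 0 1 2) =
      (sym5 true true b03 b04 false b13 b14 b23 b24 b34, fun i => i == 0) := by
  decide +kernel

theorem invSeq_pathWord_fin5 (H : SimpleGraph (Fin 5)) (γ : Fin 5 → ℤˣ) (h01 : H.Adj 0 1)
    (h12 : H.Adj 1 2) : invSeq (H, γ) (pathWord 0 1 2) = flipOn (H, γ) {0} := by
  apply BoolState.invSeq_eq_flipOn_of_run
  simp only [H.decide_adj_eq_sym5, h01, h12, decide_true]
  exact run_pathWord_sym5 ..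

theorem invSeq_cherryWord_fin5 (H : SimpleGraph (Fin 5)) (γ : Fin 5 → ℤˣ) (h01 : H.Adj 0 1)
    (h02 : H.Adj 0 2) (h12 : ¬H.Adj 1 2) :
    invSeq (H, γ) (cherryWord 0 1 2) = flipOn (H, γ) {0} := by
  apply BoolState.invSeq_eq_flipOn_of_run
  simp only [H.decide_adj_eq_sym5, h01, h02, h12, decide_true, decide_false]
  exact run_cherryWord_sym5 ..

theorem exists_injective_fin5_cover {V : Type*} [Fintype V] (hV : 5 ≤ Fintype.card V)
    {a b c : V} (hab : a ≠ b) (hac : a ≠ c) (hbc : b ≠ c) (x y : V) :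
    ∃ d e : V, Function.Injective ![a, b, c, d, e] ∧
      x ∈ Set.range ![a, b, c, d, e] ∧ y ∈ Set.range ![a, b, c, d, e] := by
  classical
  set abc : Finset V := {a, b, c}
  have hcard : 2 ≤ (Finset.univ \ abc).card := by
    rw [Finset.card_sdiff_of_subset (Finset.subset_univ _), Finset.card_univ,
      Finset.card_eq_three.mpr ⟨a, b, c, hab, hac, hbc, rfl⟩]
    omega
  obtain ⟨D, hxyD, hD, hD2⟩ := Finset.exists_subsuperset_card_eq
    (Finset.sdiff_subset_sdiff (Finset.subset_univ {x, y}) le_rfl)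
    ((Finset.card_le_card Finset.sdiff_subset).trans Finset.card_le_two) hcard
  obtain ⟨d, e, hde, rfl⟩ := Finset.card_eq_two.mp hD2
  have hd : d ≠ a ∧ d ≠ b ∧ d ≠ c := by simpa [abc] using (Finset.mem_sdiff.mp (hD (by simp))).2
  have he : e ≠ a ∧ e ≠ b ∧ e ≠ c := by simpa [abc] using (Finset.mem_sdiff.mp (hD (by simp))).2
  have hcover : ∀ v ∈ ({x, y} : Finset V), v ∈ Set.range ![a, b, c, d, e] := by
    intro v hv
    have := sdiff_le_iff.mp hxyD hv
    simp only [abc, Finset.sup_eq_union, Finset.mem_union, Finset.mem_insert,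
      Finset.mem_singleton] at this
    simp only [Matrix.range_cons, Matrix.range_empty, Set.union_empty, Set.singleton_union,
      Set.mem_insert_iff, Set.mem_singleton_iff]
    tauto
  refine ⟨d, e, ?_, hcover x (by simp), hcover y (by simp)⟩
  intro i j hij
  fin_cases i <;> fin_cases j <;> simp_all [eq_comm]

theorem Bicolored.eq_flipOn_of_comap_fin5 {V : Type*} [Fintype V] (hV : 5 ≤ Fintype.card V)
    {a b c : V} (hab : a ≠ b) (hac : a ≠ c) (hbc : b ≠ c) {B B' : Bicolored V}
    (h : ∀ d e, Function.Injective ![a, b, c, d, e] →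
      B'.comap ![a, b, c, d, e] = flipOn (B.comap ![a, b, c, d, e]) {0}) :
    B' = flipOn B {a} := by
  refine ext_of_comap (W := Fin 5) fun x y => ?_
  obtain ⟨d, e, hf, hx, hy⟩ := exists_injective_fin5_cover hV hab hac hbc x y
  refine ⟨_, hx, hy, ?_⟩
  rw [h d e hf, comap_flipOn, ← hf.preimage_image {0}, Set.image_singleton]
  rfl

theorem invSeq_pathWord_of_card {V : Type*} [Fintype V] (hV : 5 ≤ Fintype.card V)
    (B : Bicolored V) {a b c : V} (hab : B.1.Adj a b) (hbc : B.1.Adj b c) (hca : c ≠ a) :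
    invSeq B (pathWord a b c) = flipOn B {a} := by
  refine Bicolored.eq_flipOn_of_comap_fin5 hV hab.ne hca.symm hbc.ne fun d e hf => ?_
  rw [show pathWord a b c = (pathWord 0 1 2).map ![a, b, c, d, e] from rfl,
    Bicolored.comap_invSeq hf]
  exact invSeq_pathWord_fin5 _ _ hab hbc

theorem invSeq_cherryWord_of_card {V : Type*} [Fintype V] (hV : 5 ≤ Fintype.card V)
    (B : Bicolored V) {a b c : V} (hab : B.1.Adj a b) (hac : B.1.Adj a c) (hbc : ¬B.1.Adj b c)
    (hbc' : b ≠ c) : invSeq B (cherryWord a b c) = flipOn B {a} := by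
  refine Bicolored.eq_flipOn_of_comap_fin5 hV hab.ne hac.ne hbc' fun d e hf => ?_
  rw [show cherryWord a b c = (cherryWord 0 1 2).map ![a, b, c, d, e] from rfl,
    Bicolored.comap_invSeq hf]
  exact invSeq_cherryWord_fin5 _ _ hab hac hbc

theorem five_le_card_sum_fin_two {V : Type*} [Fintype V] {a b c : V} (hab : a ≠ b)
    (hac : a ≠ c) (hbc : b ≠ c) : 5 ≤ Fintype.card (V ⊕ Fin 2) := by
  have := Fintype.two_lt_card_iff.mpr ⟨a, b, c, hab, hac, hbc⟩
  simp only [Fintype.card_sum, Fintype.card_fin]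
  omega

theorem invSeq_pathWord {V : Type*} [Fintype V] (B : Bicolored V) {a b c : V}
    (hab : B.1.Adj a b) (hbc : B.1.Adj b c) (hca : c ≠ a) :
    invSeq B (pathWord a b c) = flipOn B {a} := by
  refine Bicolored.invSeq_eq_flipOn_of_comap Sum.inl_injective B.comap_addTwoIsolated ?_
  rw [Set.image_singleton]
  exact invSeq_pathWord_of_card (five_le_card_sum_fin_two hab.ne hca.symm hbc.ne) _
    (B.addTwoIsolated_adj_inl.mpr hab) (B.addTwoIsolated_adj_inl.mpr hbc) (by simpa using hca)

theorem invSeq_cherryWord {V : Type*} [Fintype V] (B : Bicolored V) {a b c : V}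
    (hab : B.1.Adj a b) (hac : B.1.Adj a c) (hbc : ¬B.1.Adj b c) (hbc' : b ≠ c) :
    invSeq B (cherryWord a b c) = flipOn B {a} := by
  refine Bicolored.invSeq_eq_flipOn_of_comap Sum.inl_injective B.comap_addTwoIsolated ?_
  rw [Set.image_singleton]
  exact invSeq_cherryWord_of_card (five_le_card_sum_fin_two hab.ne hac.ne hbc') _
    (B.addTwoIsolated_adj_inl.mpr hab) (B.addTwoIsolated_adj_inl.mpr hac)
    (B.addTwoIsolated_adj_inl.not.mpr hbc) (by simpa using hbc')

theorem SimpleGraph.Connected.exists_path_or_cherry {V : Type*} [Fintype V]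
    {G : SimpleGraph V} (hG : G.Connected) (hV : 3 ≤ Fintype.card V) (a : V) :
    (∃ b c, G.Adj a b ∧ G.Adj b c ∧ c ≠ a) ∨
      ∃ b c, G.Adj a b ∧ G.Adj a c ∧ ¬G.Adj b c ∧ b ≠ c := by
  classical
  obtain ⟨v, hva⟩ := Fintype.exists_ne_of_one_lt_card (by omega) a
  obtain ⟨d, -, rfl : d.fst = a, -⟩ := (hG.preconnected a v).some.exists_boundary_dart {a} rfl hva
  obtain ⟨u, -, hu⟩ := Finset.exists_mem_notMem_of_card_lt_card
    (s := {d.fst, d.snd}) (t := Finset.univ) (Finset.card_le_two.trans_lt (by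
      rw [Finset.card_univ]; omega))
  obtain ⟨d', -, hd'S, hd'c⟩ := (hG.preconnected d.fst u).some.exists_boundary_dart
    {d.fst, d.snd} (by simp) (by simpa using hu)
  simp only [Set.mem_insert_iff, Set.mem_singleton_iff, not_or] at hd'S hd'c
  rcases hd'S with ha | hb
  · by_cases hbc : G.Adj d.snd d'.snd
    · exact .inl ⟨_, _, d.adj, hbc, hd'c.1⟩
    · exact .inr ⟨_, _, d.adj, ha ▸ d'.adj, hbc, Ne.symm hd'c.2⟩
  · exact .inl ⟨_, _, d.adj, hb ▸ d'.adj, hd'c.1⟩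

/-- In a connected graph on at least 3 vertices, the color of any single vertex can be
flipped (graph unchanged) using a string of length 7. -/
theorem stmt9 {V : Type*} [Fintype V] (G : SimpleGraph V) (hconn : G.Connected)
    (hn : 3 ≤ Fintype.card V) (a : V) (β : V → ℤˣ) :
    ∃ w : List V, w.length = 7 ∧ invSeq (G, β) w = flipOn (G, β) {a} := by
  rcases hconn.exists_path_or_cherry hn a with
    ⟨b, c, hab, hbc, hca⟩ | ⟨b, c, hab, hac, hbc, hbc'⟩
  · exact ⟨pathWord a b c, rfl, invSeq_pathWord (G, β) hab hbc hca⟩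
  · exact ⟨cherryWord a b c, rfl, invSeq_cherryWord (G, β) hab hac hbc hbc'⟩
end

section
/- Let T be a rooted tree on n vertices in which every vertex has odd degree. Then the edge set of T can be partitioned into (n-2)/2 paths P_3 (on 3 vertices) together with one single edge K_2, such that: (i) in each P_3 the two endvertices are children of its center with respect to the root; (ii) the root is an endvertex of the K_2; (iii) every vertex of T is an endvertex of exactly one path (P_3 or K_2) in the partition. -/
/-! Orient the tree away from the root `r`. Every vertex `c ≠ r` has exactly one neighbour closer
to `r` (its parent), so its number of children is its degree minus one, which is even, while `r`
has an odd number of children. Fix a child `v` of `r` and pair up, at every vertex `c`, its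
children other than `v`: each pair `x, y` gives the `P_3` `x - c - y`, and `rv` is the `K_2`.
Every vertex other than `r` is a child of exactly one vertex, so it is an endvertex exactly once,
and the edges used are exactly the edges `u - parent u`, `u ≠ r`, i.e. all edges of the tree. -/

open Classical

open Finset

theorem Multiset.Nodup.of_bind {α β : Type*} {m : Multiset α} {f : α → Multiset β}
    (h : (m.bind f).Nodup) (hf : ∀ a ∈ m, f a ≠ 0) : m.Nodup := by
  refine Multiset.nodup_iff_ne_cons_cons.2 fun a t hm => ?_
  subst hm
  simp only [Multiset.cons_bind, Multiset.nodup_add] at h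
  exact hf a (Multiset.mem_cons_self _ _)
    (disjoint_self.1 (h.2.2.mono_right (Multiset.le_add_right _ _)))

theorem List.exists_bind_pair_eq {α : Type*} :
    ∀ l : List α, Even l.length → ∃ M : Multiset (α × α), M.bind (fun q => {q.1, q.2}) = l
  | [], _ => ⟨0, rfl⟩
  | [_], h => absurd h (by simp)
  | a :: b :: l, h =>
    have ⟨M, hM⟩ := exists_bind_pair_eq l (by simpa [Nat.even_add_one] using h)
    ⟨(a, b) ::ₘ M, by rw [Multiset.cons_bind, hM]; rfl⟩

theorem Multiset.exists_bind_pair_eq {α : Type*} (m : Multiset α) (hm : Even (card m)) :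
    ∃ M : Multiset (α × α), M.bind (fun q => {q.1, q.2}) = m := by
  induction m using Quotient.inductionOn with
  | h l => exact l.exists_bind_pair_eq hm

theorem Finset.univ_val_bind_filter_eq {α β : Type*} [Fintype β] [DecidableEq β]
    (s : Finset α) (f : α → β) : univ.val.bind (fun b => (s.filter (f · = b)).val) = s.val :=
  congrArg val (disjiUnion_filter_eq_of_maps_to fun _ _ => mem_univ _)

namespace SimpleGraph

variable {V : Type*} {G : SimpleGraph V} {r u w : V}

noncomputable def parent (G : SimpleGraph V) (r u : V) : V :=
  if h : ∃ w, G.Adj u w ∧ G.dist r u = G.dist r w + 1 then h.choose else u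

theorem Connected.exists_adj_dist_eq_add_one (hG : G.Connected) (hu : u ≠ r) :
    ∃ w, G.Adj u w ∧ G.dist r u = G.dist r w + 1 := by
  obtain ⟨p, -, hp⟩ := hG.exists_path_of_dist r u
  have hpos : 0 < G.dist r u := hG.pos_dist_of_ne hu.symm
  have hnil : ¬p.Nil := by
    rw [← Walk.length_eq_zero_iff, hp]
    exact hpos.ne'
  have hadj := p.adj_penultimate hnil
  refine ⟨p.penultimate, hadj.symm, ?_⟩
  have hle : G.dist r p.penultimate ≤ p.length - 1 := by
    simpa using dist_le p.dropLast
  have hge : G.dist r u ≤ G.dist r p.penultimate + G.dist p.penultimate u :=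
    hG.dist_triangle
  rw [dist_eq_one_iff_adj.2 hadj] at hge
  omega

theorem Connected.adj_parent (hG : G.Connected) (hu : u ≠ r) : G.Adj u (G.parent r u) := by
  rw [parent, dif_pos (hG.exists_adj_dist_eq_add_one hu)]
  exact (hG.exists_adj_dist_eq_add_one hu).choose_spec.1

theorem Connected.dist_parent (hG : G.Connected) (hu : u ≠ r) :
    G.dist r u = G.dist r (G.parent r u) + 1 := by
  rw [parent, dif_pos (hG.exists_adj_dist_eq_add_one hu)]
  exact (hG.exists_adj_dist_eq_add_one hu).choose_spec.2

theorem IsTree.eq_parent_of_adj (hT : G.IsTree) (h : G.Adj u w)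
    (hd : G.dist r u = G.dist r w + 1) : w = G.parent r u := by
  have hu : u ≠ r := by rintro rfl; simp at hd
  have hpath : ∀ x, G.Adj u x → G.dist r u = G.dist r x + 1 →
      ∃ q : G.Path u r, q.1.snd = x := by
    intro x hx hdx
    obtain ⟨q, -, hq⟩ := hT.connected.exists_path_of_dist x r
    refine ⟨⟨q.cons hx, Walk.isPath_of_length_eq_dist _ ?_⟩, Walk.snd_cons _ _⟩
    rw [Walk.length_cons, hq, dist_comm (u := x), dist_comm (u := u), hdx]
  obtain ⟨q₁, rfl⟩ := hpath w h hd
  obtain ⟨q₂, hq₂⟩ := hpath _ (hT.connected.adj_parent hu) (hT.connected.dist_parent hu)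
  rw [(hT.isAcyclic.subsingleton_path u r).elim q₁ q₂, hq₂]

theorem IsTree.adj_iff (hT : G.IsTree) :
    G.Adj u w ↔ (w ≠ r ∧ G.parent r w = u) ∨ (u ≠ r ∧ G.parent r u = w) := by
  constructor
  · intro h
    rcases hT.dist_eq_dist_add_one_of_adj r h with hd | hd
    · exact .inr ⟨by rintro rfl; simp at hd, (hT.eq_parent_of_adj h hd).symm⟩
    · exact .inl ⟨by rintro rfl; simp at hd, (hT.eq_parent_of_adj h.symm hd).symm⟩
  · rintro (⟨hw, rfl⟩ | ⟨hu, rfl⟩)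
    · exact (hT.connected.adj_parent hw).symm
    · exact hT.connected.adj_parent hu

variable [Fintype V]

/-- A cherry is a `P_3`; the triple `(x, c, y)` stands for the path `x - c - y` centred at `c`. -/
def cherries (M : V → Multiset (V × V)) : Multiset (V × V × V) :=
  univ.val.bind fun c => (M c).map fun q => (q.1, c, q.2)

theorem mem_cherries {M : V → Multiset (V × V)} {p : V × V × V} :
    p ∈ cherries M ↔ (p.1, p.2.2) ∈ M p.2.1 := by
  obtain ⟨x, c, y⟩ := p
  simp [cherries]

theorem bind_ends_cherries (M : V → Multiset (V × V)) :
    (cherries M).bind (fun p => {p.1, p.2.2}) =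
      univ.val.bind fun c => (M c).bind fun q => {q.1, q.2} := by
  simp only [cherries, Multiset.bind_assoc, Multiset.bind_map]

variable [DecidableEq V]

noncomputable def children (G : SimpleGraph V) (r c : V) : Finset V :=
  {u ∈ univ.erase r | G.parent r u = c}

@[simp]
theorem mem_children {c : V} : u ∈ G.children r c ↔ u ≠ r ∧ G.parent r u = c := by
  simp [children]

theorem erase_children_eq_filter (c v : V) :
    (G.children r c).erase v = {u ∈ (univ.erase r).erase v | G.parent r u = c} :=
  (filter_erase _ _ _).symm

theorem Connected.adj_of_mem_children (hG : G.Connected) {c : V} (hu : u ∈ G.children r c) :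
    G.Adj c u := by
  obtain ⟨hur, rfl⟩ := mem_children.1 hu
  exact (hG.adj_parent hur).symm

theorem Connected.dist_of_mem_children (hG : G.Connected) {c : V} (hu : u ∈ G.children r c) :
    G.dist r u = G.dist r c + 1 := by
  obtain ⟨hur, rfl⟩ := mem_children.1 hu
  exact hG.dist_parent hur

def IsChildPairing (G : SimpleGraph V) (r v : V) (M : V → Multiset (V × V)) : Prop :=
  ∀ c, (M c).bind (fun q => {q.1, q.2}) = ((G.children r c).erase v).val

namespace IsChildPairing

variable {v : V} {M : V → Multiset (V × V)}

theorem mem_children (hM : G.IsChildPairing r v M) {p : V × V × V} (hp : p ∈ cherries M) :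
    p.1 ∈ G.children r p.2.1 ∧ p.2.2 ∈ G.children r p.2.1 := by
  have h := (Multiset.le_bind _ (mem_cherries.1 hp)).trans_eq (hM p.2.1)
  constructor <;> exact (mem_erase.1 (Multiset.mem_of_le h (by simp))).2

theorem bind_ends_cherries_add_singleton (hM : G.IsChildPairing r v M) (hvr : v ≠ r) :
    (cherries M).bind (fun p => {p.1, p.2.2}) + {v} = (univ.erase r).val := by
  rw [bind_ends_cherries, Multiset.bind_congr fun c _ => (hM c).trans
    (congrArg val (erase_children_eq_filter c v)), univ_val_bind_filter_eq, add_comm,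
    Multiset.singleton_add, erase_val, Multiset.cons_erase (mem_erase.2 ⟨hvr, mem_univ v⟩)]

theorem bind_ends_cherries_add_pair (hM : G.IsChildPairing r v M) (hvr : v ≠ r) :
    (cherries M).bind (fun p => {p.1, p.2.2}) + {r, v} = univ.val := by
  rw [Multiset.insert_eq_cons, Multiset.add_cons, hM.bind_ends_cherries_add_singleton hvr,
    erase_val, Multiset.cons_erase (mem_univ_val r)]

end IsChildPairing

variable [DecidableRel G.Adj]

theorem IsTree.card_children_root (hT : G.IsTree) : #(G.children r r) = G.degree r := by
  rw [← card_neighborFinset_eq_degree]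
  congr 1
  ext w
  simp [hT.adj_iff (r := r)]

theorem IsTree.card_children_add_one (hT : G.IsTree) {c : V} (hc : c ≠ r) :
    #(G.children r c) + 1 = G.degree c := by
  have hpc : G.parent r c ∉ G.children r c := by
    simp only [mem_children, not_and]
    intro hp hpp
    have h₁ := hT.connected.dist_parent hc
    have h₂ := hT.connected.dist_parent hp
    rw [hpp] at h₂
    omega
  have hnbr : G.neighborFinset c = insert (G.parent r c) (G.children r c) := by
    ext w
    simp [hT.adj_iff (r := r), hc, eq_comm, or_comm]
  rw [← card_neighborFinset_eq_degree, hnbr, card_insert_of_notMem hpc]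

theorem IsTree.even_card_erase_children (hT : G.IsTree) (hodd : ∀ c, Odd (G.degree c)) {v : V}
    (hv : v ∈ G.children r r) (c : V) : Even #((G.children r c).erase v) := by
  by_cases hc : c = r
  · subst hc
    rw [card_erase_of_mem hv]
    exact Nat.Odd.sub_odd (hT.card_children_root ▸ hodd c) odd_one
  · have hvc : v ∉ G.children r c := by
      rw [mem_children] at hv ⊢
      exact fun h => hc (h.2.symm.trans hv.2)
    have := hodd c
    rw [← hT.card_children_add_one hc, Nat.odd_add_one, Nat.not_odd_iff_even] at this
    rwa [erase_eq_of_notMem hvc]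

theorem IsTree.exists_isChildPairing (hT : G.IsTree) (hodd : ∀ c, Odd (G.degree c)) {v : V}
    (hv : v ∈ G.children r r) : ∃ M, G.IsChildPairing r v M :=
  ⟨_, fun c =>
    (Multiset.exists_bind_pair_eq _ (hT.even_card_erase_children hodd hv c)).choose_spec⟩

theorem IsTree.map_parent_eq_edgeFinset (hT : G.IsTree) :
    (univ.erase r).val.map (fun u => s(u, G.parent r u)) = G.edgeFinset.val := by
  have hinj : Set.InjOn (fun u => s(u, G.parent r u)) (univ.erase r : Finset V) := by
    intro x hx y hy hxy
    simp only [coe_erase, coe_univ, Set.mem_sdiff, Set.mem_univ, Set.mem_singleton_iff,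
      true_and] at hx hy
    rcases Sym2.eq_iff.1 hxy with ⟨rfl, -⟩ | ⟨hxp, hyp⟩
    · rfl
    · have h₁ := hT.connected.dist_parent hx
      have h₂ := hT.connected.dist_parent hy
      rw [← hxp] at h₂
      rw [hyp] at h₁
      omega
  rw [← image_val_of_injOn hinj]
  congr 1
  ext e
  induction e using Sym2.ind with
  | h x y =>
    simp only [mem_image, mem_erase, mem_univ, and_true, mem_edgeFinset, mem_edgeSet,
      hT.adj_iff (r := r), Sym2.eq_iff]
    grind

theorem IsTree.bind_edges_cherries_add_singleton (hT : G.IsTree) {v : V}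
    {M : V → Multiset (V × V)} (hM : G.IsChildPairing r v M) (hv : v ∈ G.children r r) :
    (cherries M).bind (fun p => {s(p.1, p.2.1), s(p.2.1, p.2.2)}) + {s(r, v)} =
      G.edgeFinset.val := by
  obtain ⟨hvr, hpv⟩ := mem_children.1 hv
  calc (cherries M).bind (fun p => {s(p.1, p.2.1), s(p.2.1, p.2.2)}) + {s(r, v)}
      = ((cherries M).bind (fun p => {p.1, p.2.2}) + {v}).map fun u => s(u, G.parent r u) := by
        rw [Multiset.map_add, Multiset.map_bind, Multiset.map_singleton, hpv, Sym2.eq_swap]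
        congr 1
        refine Multiset.bind_congr fun p hp => ?_
        obtain ⟨h₁, h₂⟩ := hM.mem_children hp
        simp [(mem_children.1 h₁).2, (mem_children.1 h₂).2, Sym2.eq_swap]
    _ = G.edgeFinset.val := by
        rw [hM.bind_ends_cherries_add_singleton hvr, hT.map_parent_eq_edgeFinset]

end SimpleGraph

theorem stmt10_general {V : Type*} [Fintype V] (G : SimpleGraph V)
    [DecidableRel G.Adj] (hT : G.IsTree) (r : V) (hodd : ∀ v : V, Odd (G.degree v)) :
    ∃ (P : Finset (V × V × V)) (v : V),
      P.card = (Fintype.card V - 2) / 2 ∧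
      G.Adj r v ∧
      (∀ p ∈ P, G.Adj p.2.1 p.1 ∧ G.Adj p.2.1 p.2.2 ∧ p.1 ≠ p.2.2 ∧
        G.dist r p.1 = G.dist r p.2.1 + 1 ∧ G.dist r p.2.2 = G.dist r p.2.1 + 1) ∧
      (P.val.bind (fun p => {s(p.1, p.2.1), s(p.2.1, p.2.2)}) + {s(r, v)}
        = G.edgeFinset.val) ∧
      (P.val.bind (fun p => {p.1, p.2.2}) + {r, v} = (Finset.univ : Finset V).val) := by
  obtain ⟨v, hv⟩ : (G.children r r).Nonempty := by
    rw [← card_pos, hT.card_children_root]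
    exact (hodd r).pos
  obtain ⟨M, hM⟩ := hT.exists_isChildPairing hodd hv
  have hvert := hM.bind_ends_cherries_add_pair (SimpleGraph.mem_children.1 hv).1
  -- The endvertices sit inside `univ.val`, so `P` is a set and no cherry has equal endvertices.
  have hnodup : ((SimpleGraph.cherries M).bind fun p => {p.1, p.2.2}).Nodup :=
    Multiset.nodup_of_le (Multiset.le_add_right _ _) (hvert ▸ univ.nodup)
  refine ⟨⟨SimpleGraph.cherries M, hnodup.of_bind fun _ _ => by simp⟩, v, ?_,
    hT.connected.adj_of_mem_children hv, fun p hp => ?_,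
    hT.bind_edges_cherries_add_singleton hM hv, hvert⟩
  · have hcard := congrArg Multiset.card hvert
    simp only [Multiset.card_add, Multiset.card_bind, Function.comp_def, Multiset.card_pair,
      Multiset.map_const', Multiset.sum_replicate, smul_eq_mul, card_val, card_univ] at hcard
    change Multiset.card (SimpleGraph.cherries M) = _
    omega
  · obtain ⟨h₁, h₂⟩ := hM.mem_children hp
    exact ⟨hT.connected.adj_of_mem_children h₁, hT.connected.adj_of_mem_children h₂,
      by simpa using (Multiset.nodup_bind.1 hnodup).1 p hp,
      hT.connected.dist_of_mem_children h₁, hT.connected.dist_of_mem_children h₂⟩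

/-- The edges of a rooted odd tree `G` (rooted at `r`) on `n` vertices can be partitioned
into `(n-2)/2` copies of `P_3` (encoded as triples `(x, c, y)` for the path `x - c - y`)
together with one `K_2` (the edge `r v`), such that:
(i) in each `P_3` the two endvertices are children of its center with respect to `r`
    (their distance from `r` exceeds that of the center by one);
(ii) the root `r` is an endvertex of the `K_2`; and
(iii) every vertex is an endvertex of exactly one member of the partition (the multiset
      of endvertices is exactly the vertex set). The edge multiset of the members is
      exactly the edge set of the tree, so the members partition the edges. -/
theorem stmt10 {V : Type*} [Fintype V] [DecidableEq V] (G : SimpleGraph V)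
    [DecidableRel G.Adj] (hT : G.IsTree) (r : V) (hodd : ∀ v : V, Odd (G.degree v)) :
    ∃ (P : Finset (V × V × V)) (v : V),
      P.card = (Fintype.card V - 2) / 2 ∧
      G.Adj r v ∧
      (∀ p ∈ P, G.Adj p.2.1 p.1 ∧ G.Adj p.2.1 p.2.2 ∧ p.1 ≠ p.2.2 ∧
        G.dist r p.1 = G.dist r p.2.1 + 1 ∧ G.dist r p.2.2 = G.dist r p.2.1 + 1) ∧
      (P.val.bind (fun p => {s(p.1, p.2.1), s(p.2.1, p.2.2)}) + {s(r, v)}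
        = G.edgeFinset.val) ∧
      (P.val.bind (fun p => {p.1, p.2.2}) + {r, v} = (Finset.univ : Finset V).val) :=
  stmt10_general G hT r hodd
end
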